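/- Assume each synthesiser map g_t is twice continuously differentiable. Then for every 1 ≤ t ≤ T there exist constants K > 0 and α₀ > 0 such that for all 0 < α ≤ α₀, ‖θ_t^{BP}(α) − θ_0 − α Σ_{a=0}^{t−1} Δ̄_a^t‖₂ ≤ K α²; that is, the accumulate BP(λ) iterate deviates from its first-order expansion by O(α²). -/

import Mathlib

open Filter Finset Matrix

noncomputable section

/-- The Euclidean (ℓ²) norm of a finite real vector. -/
def euclNorm {k : ℕ} (x : Fin k → ℝ) : ℝ := Real.sqrt (∑ i, x i ^ 2)

/-- Data of the synthetic-gradient setting: the gradient discount factor `γ`,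
the trace-decay parameter `lam` (λ), the RNN Jacobians `J t = ∂h_{t+1}/∂h_t`,
the immediate loss gradients `c t = ∂L_t/∂h_t` (row vectors), the synthesiser
maps `g t : θ ↦ g(h_t; θ)` (producing row vectors), and the initial parameter `θ0`. -/
structure SGData (d m : ℕ) where
  γ : ℝ
  lam : ℝ
  J : ℕ → Matrix (Fin d) (Fin d) ℝ
  c : ℕ → Fin d → ℝ
  g : ℕ → (Fin m → ℝ) → Fin d → ℝ
  θ0 : Fin m → ℝ

namespace SGData

variable {d m : ℕ}

/-- Propagator `Pfrom a n = P(a+n, a) = J_{a+n-1} ⋯ J_a`. -/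
def Pfrom (p : SGData d m) (a : ℕ) : ℕ → Matrix (Fin d) (Fin d) ℝ
  | 0 => 1
  | n + 1 => p.J (a + n) * p.Pfrom a n

/-- Propagator `P b a = P(b, a) = J_{b-1} ⋯ J_a` (for `b ≥ a`). -/
def P (p : SGData d m) (b a : ℕ) : Matrix (Fin d) (Fin d) ℝ := p.Pfrom a (b - a)

/-- The Jacobian matrix `Dg_t(θ) ∈ ℝ^{d×m}` of the synthesiser map `g t` at `θ`. -/
def Dg (p : SGData d m) (t : ℕ) (θ : Fin m → ℝ) : Matrix (Fin d) (Fin m) ℝ :=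
  Matrix.of fun i j => fderiv ℝ (p.g t) θ (Pi.single j 1) i

/-- The temporal-difference error `δ_t` at parameter `θ`:
`δ_t = (c_{t+1} + γ g_{t+1}(θ)) J_t − g_t(θ)`. -/
def tdErr (p : SGData d m) (t : ℕ) (θ : Fin m → ℝ) : Fin d → ℝ :=
  Matrix.vecMul (p.c (t + 1) + p.γ • p.g (t + 1) θ) (p.J t) - p.g t θ

/-- The accumulate BP(λ) state `(θ_t^{BP}, e_t)` with learning rate `α`:
`θ_0^{BP} = θ0`, `e_0 = Dg_0(θ_0^{BP})`,
`θ_{t+1}^{BP} = θ_t^{BP} + α (δ_t e_t)ᵀ`, `e_{t+1} = γλ J_t e_t + Dg_{t+1}(θ_{t+1}^{BP})`. -/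
def BPstate (p : SGData d m) (α : ℝ) : ℕ → (Fin m → ℝ) × Matrix (Fin d) (Fin m) ℝ
  | 0 => (p.θ0, p.Dg 0 p.θ0)
  | t + 1 =>
    let s := p.BPstate α t
    let θ' := s.1 + α • Matrix.vecMul (p.tdErr t s.1) s.2
    (θ', (p.γ * p.lam) • (p.J t * s.2) + p.Dg (t + 1) θ')

/-- The accumulate BP(λ) iterate `θ_t^{BP}(α)`. -/
def θBP (p : SGData d m) (α : ℝ) (t : ℕ) : Fin m → ℝ := (p.BPstate α t).1

/-- `Ḡ_a^{(n)}`: the n-step synthetic gradient with the bootstrap estimate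
evaluated at the initial parameter `θ0`. -/
def Gbar (p : SGData d m) (a n : ℕ) : Fin d → ℝ :=
  (∑ k ∈ Finset.range n, p.γ ^ k • Matrix.vecMul (p.c (a + k + 1)) (p.P (a + k + 1) a))
    + p.γ ^ n • Matrix.vecMul (p.g (a + n) p.θ0) (p.P (a + n) a)

/-- `Ḡ_a^{λ|t}`: the interim λ-weighted synthetic gradient evaluated at `θ0`. -/
def GbarLam (p : SGData d m) (a t : ℕ) : Fin d → ℝ :=
  (1 - p.lam) • (∑ n ∈ Finset.range (t - a - 1), p.lam ^ n • p.Gbar a (n + 1))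
    + p.lam ^ (t - a - 1) • p.Gbar a (t - a)

/-- `Δ̄_a^t = ((Ḡ_a^{λ|t} − g_a(θ0)) Dg_a(θ0))ᵀ ∈ ℝ^m`. -/
def Δbar (p : SGData d m) (a t : ℕ) : Fin m → ℝ :=
  Matrix.vecMul (p.GbarLam a t - p.g a p.θ0) (p.Dg a p.θ0)

/-- Online n-step target `G_k^{(n)}` using bootstrap estimates
`ĝ_s = g_s(hist (s−1))` taken from the online history `hist`. -/
def GnOn (p : SGData d m) (hist : ℕ → Fin m → ℝ) (k n : ℕ) : Fin d → ℝ :=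
  (∑ j ∈ Finset.range n, p.γ ^ j • Matrix.vecMul (p.c (k + j + 1)) (p.P (k + j + 1) k))
    + p.γ ^ n • Matrix.vecMul (p.g (k + n) (hist (k + n - 1))) (p.P (k + n) k)

/-- Online interim target `G_k^{λ|H}` with horizon `H`. -/
def GLamOn (p : SGData d m) (hist : ℕ → Fin m → ℝ) (H k : ℕ) : Fin d → ℝ :=
  (1 - p.lam) • (∑ n ∈ Finset.range (H - k - 1), p.lam ^ n • p.GnOn hist k (n + 1))
    + p.lam ^ (H - k - 1) • p.GnOn hist k (H - k)

/-- Inner pass of the online λ-SG algorithm at horizon `H`: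
`φ_0 = θ^{⟨H−1⟩}` and `φ_{k+1} = φ_k + α ((G_k^{λ|H} − g_k(φ_k)) Dg_k(φ_k))ᵀ`. -/
def phi (p : SGData d m) (α : ℝ) (hist : ℕ → Fin m → ℝ) (H : ℕ) : ℕ → Fin m → ℝ
  | 0 => hist (H - 1)
  | k + 1 =>
    p.phi α hist H k
      + α • Matrix.vecMul (p.GLamOn hist H k - p.g k (p.phi α hist H k))
          (p.Dg k (p.phi α hist H k))

/-- History of online λ-SG iterates: `hist α t s = θ^{⟨s⟩}` for all `s ≤ t`,
with `θ^{⟨0⟩} = θ0` and `θ^{⟨t+1⟩} = φ_{t+1}` from the inner pass at horizon `t+1`. -/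
def hist (p : SGData d m) (α : ℝ) : ℕ → ℕ → Fin m → ℝ
  | 0 => fun _ => p.θ0
  | t + 1 => Function.update (p.hist α t) (t + 1) (p.phi α (p.hist α t) (t + 1) (t + 1))

/-- The online λ-SG iterate `θ_t^λ(α) = θ^{⟨t⟩}`. -/
def θon (p : SGData d m) (α : ℝ) (t : ℕ) : Fin m → ℝ := p.hist α t t

end SGData

/-!
Every parameter visited by BP(λ) up to time `t` is `θ0 + O(α)`, so by differentiability at `θ0`
the TD errors are `δ_s(θ0) + O(α)` and the traces are `ē_s + O(α)`, where
`ē_s = Σ_{a ≤ s} (γλ)^{s-a} P(s,a) Dg_a(θ0)` is the trace with the parameter frozen at `θ0`.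
Hence `θ_t = θ0 + α Σ_{s<t} δ_s(θ0) ē_s + O(α²)`. Exchanging the two sums turns this first-order
term into `Σ_a Δ̄_a^t`, by the forward/backward-view identity
`Ḡ_a^{λ|t} − g_a(θ0) = Σ_k (γλ)^k δ_{a+k}(θ0) P(a+k,a)`; it comes from telescoping
`Ḡ_a^{(n)} − g_a(θ0) = Σ_{k<n} γ^k δ_{a+k}(θ0) P(a+k,a)` and summing the `λ`-weights.
-/

open Asymptotics Topology

lemma LinearMap.isBigO_apply₂ {E F G ι : Type*} [NormedAddCommGroup E] [NormedSpace ℝ E]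
    [FiniteDimensional ℝ E] [NormedAddCommGroup F] [NormedSpace ℝ F] [FiniteDimensional ℝ F]
    [NormedAddCommGroup G] [NormedSpace ℝ G] (B : E →ₗ[ℝ] F →ₗ[ℝ] G) {l : Filter ι}
    {f : ι → E} {g : ι → F} {u v : ι → ℝ} (hf : f =O[l] u) (hg : g =O[l] v) :
    (fun x => B (f x) (g x)) =O[l] fun x => u x * v x := by
  let Bc : E →L[ℝ] F →L[ℝ] G :=
    LinearMap.toContinuousLinearMap (LinearMap.toContinuousLinearMap.toLinearMap ∘ₗ B)
  exact Bc.isBoundedBilinearMap.isBigO_comp.trans (hf.norm_left.mul hg.norm_left)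

lemma LinearMap.isBigO_apply₂_sub {E F G ι : Type*} [NormedAddCommGroup E] [NormedSpace ℝ E]
    [FiniteDimensional ℝ E] [NormedAddCommGroup F] [NormedSpace ℝ F] [FiniteDimensional ℝ F]
    [NormedAddCommGroup G] [NormedSpace ℝ G] (B : E →ₗ[ℝ] F →ₗ[ℝ] G) {l : Filter ι}
    {f : ι → E} {g : ι → F} {f₀ : E} {g₀ : F} {u : ι → ℝ} (hf : (fun x => f x - f₀) =O[l] u)
    (hg : (fun x => g x - g₀) =O[l] u) (hu : Tendsto u l (𝓝 0)) :
    (fun x => B (f x) (g x) - B f₀ g₀) =O[l] u := by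
  have hsplit : (fun x => B (f x) (g x) - B f₀ g₀)
      = fun x => B (f x - f₀) (g x) + B f₀ (g x - g₀) := by
    funext x; simp only [map_sub, LinearMap.sub_apply]; abel
  have hg_bdd : g =O[l] fun _ => (1 : ℝ) :=
    (tendsto_sub_nhds_zero_iff.1 (hg.trans_tendsto hu)).isBigO_one ℝ
  have h₁ := B.isBigO_apply₂ hf hg_bdd
  have h₂ := B.isBigO_apply₂ (isBigO_const_one ℝ f₀ l) hg
  simp only [mul_one, one_mul] at h₁ h₂
  rw [hsplit]
  exact h₁.add h₂

lemma DifferentiableAt.isBigO_sub_comp {E F ι : Type*} [NormedAddCommGroup E] [NormedSpace ℝ E]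
    [NormedAddCommGroup F] [NormedSpace ℝ F] {f : E → F} {x₀ : E} (hf : DifferentiableAt ℝ f x₀)
    {l : Filter ι} {θ : ι → E} {u : ι → ℝ} (hθ : (fun i => θ i - x₀) =O[l] u)
    (hu : Tendsto u l (𝓝 0)) :
    (fun i => f (θ i) - f x₀) =O[l] u := by
  have hlim : Tendsto θ l (𝓝 x₀) := tendsto_sub_nhds_zero_iff.1 (hθ.trans_tendsto hu)
  exact (hf.hasFDerivAt.isBigO_sub.comp_tendsto hlim).trans hθ

lemma isBigO_sub_of_isBigO_sub_smul_sq {E : Type*} [NormedAddCommGroup E] [NormedSpace ℝ E]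
    {θ : ℝ → E} {x₀ v : E} (h : (fun α => θ α - x₀ - α • v) =O[𝓝 0] fun α => α ^ 2) :
    (fun α => θ α - x₀) =O[𝓝 0] fun α => α := by
  have hsplit : (fun α => θ α - x₀) = fun α => (θ α - x₀ - α • v) + α • v := by
    funext α; abel
  rw [hsplit]
  refine (h.trans (isLittleO_pow_id one_lt_two).isBigO).add ?_
  simpa using (isBigO_refl (fun α : ℝ => α) _).smul (isBigO_const_one ℝ v (𝓝 0))

lemma exists_euclNorm_le_of_isBigO_sq {k : ℕ} {f : ℝ → Fin k → ℝ}
    (hf : f =O[𝓝 0] fun α => α ^ 2) :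
    ∃ K > (0 : ℝ), ∃ α₀ > (0 : ℝ), ∀ α : ℝ, 0 < α → α ≤ α₀ → euclNorm (f α) ≤ K * α ^ 2 := by
  have hnorm : ∀ x : Fin k → ℝ, euclNorm x = ‖WithLp.toLp 2 x‖ := by
    intro x; simp [euclNorm, EuclideanSpace.norm_eq]
  have hE : (fun α => WithLp.toLp 2 (f α)) =O[𝓝 0] fun α => α ^ 2 :=
    ((EuclideanSpace.equiv (Fin k) ℝ).symm.toContinuousLinearMap.isBigO_comp f _).trans hf
  obtain ⟨K, hK, hKw⟩ := hE.exists_pos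
  obtain ⟨ε, hε, hball⟩ := Metric.eventually_nhds_iff.1 hKw.bound
  refine ⟨K, hK, ε / 2, by positivity, fun α hα hαε => ?_⟩
  have := hball (show dist α 0 < ε by rw [Real.dist_0_eq_abs, abs_of_pos hα]; linarith)
  simpa [hnorm, norm_pow] using this

lemma one_sub_smul_sum_add_pow_smul_partialSums {M : Type*} [AddCommGroup M] [Module ℝ M]
    (r : ℝ) (z : M) (y : ℕ → M) (N : ℕ) :
    (1 - r) • ∑ n ∈ range N, r ^ n • (z + ∑ k ∈ range (n + 1), y k)
      + r ^ N • (z + ∑ k ∈ range (N + 1), y k)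
      = z + ∑ k ∈ range (N + 1), r ^ k • y k := by
  induction N with
  | zero => simp
  | succ N ih =>
    rw [sum_range_succ, sum_range_succ y (N + 1), sum_range_succ (fun k => r ^ k • y k) (N + 1)]
    linear_combination (norm := module) ih

namespace SGData

variable {d m : ℕ}

/-- The eligibility trace with the parameter frozen at `θ0` (BP(λ) with learning rate `0`). -/
def frozenTrace (p : SGData d m) : ℕ → Matrix (Fin d) (Fin m) ℝ
  | 0 => p.Dg 0 p.θ0
  | s + 1 => (p.γ * p.lam) • (p.J s * p.frozenTrace s) + p.Dg (s + 1) p.θ0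

variable (p : SGData d m)

lemma P_self (a : ℕ) : p.P a a = 1 := by simp [P, Pfrom]

lemma P_succ {a s : ℕ} (h : a ≤ s) : p.P (s + 1) a = p.J s * p.P s a := by
  rw [P, P, show s + 1 - a = s - a + 1 by omega, Pfrom, show a + (s - a) = s by omega]

lemma Gbar_sub_eq_sum_tdErr (a n : ℕ) :
    p.Gbar a n - p.g a p.θ0
      = ∑ k ∈ range n, p.γ ^ k • vecMul (p.tdErr (a + k) p.θ0) (p.P (a + k) a) := by
  induction n with
  | zero => simp [Gbar, P_self]
  | succ n ih =>
    rw [sum_range_succ, ← ih]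
    simp only [Gbar, sum_range_succ, tdErr, sub_vecMul, add_vecMul, smul_vecMul, vecMul_vecMul,
      ← add_assoc, ← P_succ p (Nat.le_add_right a n)]
    module

lemma GbarLam_sub_eq_sum_tdErr {a t : ℕ} (h : a < t) :
    p.GbarLam a t - p.g a p.θ0
      = ∑ k ∈ range (t - a), (p.γ * p.lam) ^ k • vecMul (p.tdErr (a + k) p.θ0) (p.P (a + k) a) := by
  have hGbar (n : ℕ) : p.Gbar a n = p.g a p.θ0
      + ∑ k ∈ range n, p.γ ^ k • vecMul (p.tdErr (a + k) p.θ0) (p.P (a + k) a) := by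
    rw [← Gbar_sub_eq_sum_tdErr, add_sub_cancel]
  obtain ⟨N, hN⟩ : ∃ N, t - a = N + 1 := ⟨t - a - 1, by omega⟩
  rw [GbarLam, show t - a - 1 = N by omega, hN]
  simp only [hGbar]
  rw [one_sub_smul_sum_add_pow_smul_partialSums, add_sub_cancel_left]
  refine sum_congr rfl fun k _ => ?_
  rw [mul_pow, mul_smul, smul_comm]

lemma frozenTrace_eq_sum (s : ℕ) :
    p.frozenTrace s = ∑ a ∈ range (s + 1), (p.γ * p.lam) ^ (s - a) • (p.P s a * p.Dg a p.θ0) := by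
  induction s with
  | zero => simp [frozenTrace, P_self]
  | succ s ih =>
    rw [frozenTrace, ih, sum_range_succ _ (s + 1), Matrix.mul_sum, smul_sum]
    congr 1
    · refine sum_congr rfl fun a ha => ?_
      have has : a ≤ s := Nat.lt_succ_iff.1 (mem_range.1 ha)
      rw [Matrix.mul_smul, smul_smul, ← Matrix.mul_assoc, ← P_succ p has, ← pow_succ',
        Nat.sub_add_comm has]
    · simp [P_self]

lemma sum_vecMul_frozenTrace_eq_sum_Δbar (t : ℕ) :
    ∑ s ∈ range t, vecMul (p.tdErr s p.θ0) (p.frozenTrace s) = ∑ a ∈ range t, p.Δbar a t := by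
  simp only [frozenTrace_eq_sum, vecMul_sum, vecMul_smul]
  rw [sum_comm' (t' := range t) (s' := fun a => Ico a t) (fun s a => by
    simp only [mem_range, mem_Ico]; omega)]
  refine sum_congr rfl fun a ha => ?_
  rw [Δbar, GbarLam_sub_eq_sum_tdErr p (mem_range.1 ha), sum_vecMul, sum_Ico_eq_sum_range]
  simp only [smul_vecMul, vecMul_vecMul, Nat.add_sub_cancel_left]

section

attribute [local instance] Matrix.normedAddCommGroup Matrix.normedSpace

lemma differentiable_tdErr {s : ℕ} (hs : Differentiable ℝ (p.g s))
    (hs' : Differentiable ℝ (p.g (s + 1))) : Differentiable ℝ (p.tdErr s) := by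
  let Jmul : (Fin d → ℝ) →L[ℝ] (Fin d → ℝ) :=
    LinearMap.toContinuousLinearMap ((vecMulBilin ℝ ℝ).flip (p.J s))
  have : p.tdErr s = fun θ => Jmul (p.c (s + 1) + p.γ • p.g (s + 1) θ) - p.g s θ := rfl
  rw [this]
  fun_prop

lemma differentiable_Dg {s : ℕ} (hs : ContDiff ℝ 2 (p.g s)) : Differentiable ℝ (p.Dg s) := by
  let toMatrix : ((Fin m → ℝ) →L[ℝ] (Fin d → ℝ)) →L[ℝ] Matrix (Fin d) (Fin m) ℝ :=
    LinearMap.toContinuousLinearMap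
      (LinearMap.toMatrix'.toLinearMap ∘ₗ ContinuousLinearMap.coeLM ℝ)
  have : p.Dg s = fun θ => toMatrix (fderiv ℝ (p.g s) θ) := by
    funext θ; ext i j; simp [toMatrix, Dg, LinearMap.toMatrix'_apply]
  rw [this]
  exact toMatrix.differentiable.comp (hs.fderiv_right (m := 1) le_rfl |>.differentiable one_ne_zero)

lemma BPstate_expansion (hδ : ∀ s, DifferentiableAt ℝ (p.tdErr s) p.θ0)
    (hDg : ∀ s, DifferentiableAt ℝ (p.Dg s) p.θ0) (t : ℕ) :
    (fun α => (p.BPstate α t).1 - p.θ0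
        - α • ∑ s ∈ range t, vecMul (p.tdErr s p.θ0) (p.frozenTrace s)) =O[𝓝 0] (fun α => α ^ 2)
      ∧ (fun α => (p.BPstate α t).2 - p.frozenTrace t) =O[𝓝 0] (fun α => α) := by
  induction t with
  | zero => simp [BPstate, frozenTrace, isBigO_zero]
  | succ t ih =>
    obtain ⟨hθ, he⟩ := ih
    set V := ∑ s ∈ range t, vecMul (p.tdErr s p.θ0) (p.frozenTrace s)
    set δ := p.tdErr t p.θ0
    have hlim : Tendsto (fun α : ℝ => α) (𝓝 0) (𝓝 0) := tendsto_id
    have hδt : (fun α => p.tdErr t (p.BPstate α t).1 - δ) =O[𝓝 0] fun α => α :=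
      (hδ t).isBigO_sub_comp (isBigO_sub_of_isBigO_sub_smul_sq hθ) hlim
    have hstep : (fun α => vecMul (p.tdErr t (p.BPstate α t).1) (p.BPstate α t).2
        - vecMul δ (p.frozenTrace t)) =O[𝓝 0] fun α => α :=
      (vecMulBilin ℝ ℝ).isBigO_apply₂_sub hδt he hlim
    have hθ' : (fun α => (p.BPstate α (t + 1)).1 - p.θ0
        - α • (V + vecMul δ (p.frozenTrace t))) =O[𝓝 0] fun α => α ^ 2 := by
      have hsplit : (fun α => (p.BPstate α (t + 1)).1 - p.θ0
          - α • (V + vecMul δ (p.frozenTrace t))) = fun α => ((p.BPstate α t).1 - p.θ0 - α • V)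
            + α • (vecMul (p.tdErr t (p.BPstate α t).1) (p.BPstate α t).2
              - vecMul δ (p.frozenTrace t)) := by
        funext α; simp only [BPstate]; module
      rw [hsplit]
      exact hθ.add (by simpa [sq] using (isBigO_refl (fun α : ℝ => α) _).smul hstep)
    refine ⟨by rwa [sum_range_succ], ?_⟩
    have hsplit : (fun α => (p.BPstate α (t + 1)).2 - p.frozenTrace (t + 1)) = fun α =>
        (p.γ * p.lam) • mulLinearMap ℝ (p.J t) ((p.BPstate α t).2 - p.frozenTrace t)
          + (p.Dg (t + 1) (p.BPstate α (t + 1)).1 - p.Dg (t + 1) p.θ0) := by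
      funext α
      simp only [BPstate, frozenTrace, mulLinearMap_apply_apply, Matrix.mul_sub, smul_sub]
      abel
    rw [hsplit]
    refine IsBigO.add ?_ ((hDg (t + 1)).isBigO_sub_comp (isBigO_sub_of_isBigO_sub_smul_sq hθ') hlim)
    have hJ := (mulLinearMap ℝ).isBigO_apply₂ (isBigO_const_one ℝ (p.J t) _) he
    simp only [one_mul] at hJ
    exact hJ.const_smul_left (p.γ * p.lam)

lemma θBP_expansion (hg : ∀ s, ContDiff ℝ 2 (p.g s)) (t : ℕ) :
    (fun α => p.θBP α t - p.θ0 - α • ∑ a ∈ range t, p.Δbar a t) =O[𝓝 0] fun α => α ^ 2 := by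
  have hδ (s : ℕ) : DifferentiableAt ℝ (p.tdErr s) p.θ0 :=
    (p.differentiable_tdErr ((hg s).differentiable two_ne_zero)
      ((hg (s + 1)).differentiable two_ne_zero)).differentiableAt
  have hDg (s : ℕ) : DifferentiableAt ℝ (p.Dg s) p.θ0 := (p.differentiable_Dg (hg s)).differentiableAt
  simpa only [θBP, sum_vecMul_frozenTrace_eq_sum_Δbar] using (p.BPstate_expansion hδ hDg t).1

end

end SGData

theorem BPlam_second_order_expansion_general
    {d m : ℕ} (p : SGData d m)
    (hg : ∀ t : ℕ, ContDiff ℝ 2 (p.g t))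
    (t : ℕ) :
    ∃ K > (0 : ℝ), ∃ α₀ > (0 : ℝ), ∀ α : ℝ, 0 < α → α ≤ α₀ →
      euclNorm (p.θBP α t - p.θ0 - α • ∑ a ∈ Finset.range t, p.Δbar a t) ≤ K * α ^ 2 :=
  exists_euclNorm_le_of_isBigO_sq (p.θBP_expansion hg t)

/-- with `γ, λ ∈ [0,1]` and each synthesiser map twice continuously
differentiable, for every `1 ≤ t ≤ T` there exist `K > 0` and `α₀ > 0` such that
for all `0 < α ≤ α₀`,
`‖θ_t^{BP}(α) − θ_0 − α Σ_{a=0}^{t−1} Δ̄_a^t‖₂ ≤ K α²`. -/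
theorem BPlam_second_order_expansion
    {d m : ℕ} (p : SGData d m) (T : ℕ)
    (hγ : p.γ ∈ Set.Icc (0 : ℝ) 1) (hlam : p.lam ∈ Set.Icc (0 : ℝ) 1)
    (hg : ∀ t : ℕ, ContDiff ℝ 2 (p.g t))
    (t : ℕ) (ht1 : 1 ≤ t) (htT : t ≤ T) :
    ∃ K > (0 : ℝ), ∃ α₀ > (0 : ℝ), ∀ α : ℝ, 0 < α → α ≤ α₀ →
      euclNorm (p.θBP α t - p.θ0 - α • ∑ a ∈ Finset.range t, p.Δbar a t) ≤ K * α ^ 2 :=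
  BPlam_second_order_expansion_general p hg t

end
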